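/- arXiv:2301.11740 — 2 statements merged into one kernel-verified Lean document; each statement's English description precedes it below -/
import Mathlib

section
/- Let 𝔸 = (A, ≤, →, Σ) be an implicative algebra with |A| < κ for a strongly inaccessible cardinal κ, and let W, ∈_W, =_W be as defined below. Then there exists ρ ∈ Σ such that ρ ≤ ⨅_{α∈W} (α =_W α). -/
universe u

/-- An implicative algebra `𝔸 = (A, ≤, →, Σ)`:  a complete lattice `(A, ≤)` together with an
implication `imp` which is antitone in its first argument, monotone in its second argument and
turns infima in the second argument into infima, and a separator `Sig ⊆ A` which is upward
closed, closed under modus ponens and contains the combinators `K` and `S`. -/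
structure ImplicativeAlgebra (A : Type u) [CompleteLattice A] where
  imp : A → A → A
  imp_antitone : ∀ ⦃a a' b : A⦄, a ≤ a' → imp a' b ≤ imp a b
  imp_monotone : ∀ ⦃a b b' : A⦄, b ≤ b' → imp a b ≤ imp a b'
  imp_sInf : ∀ (a : A) (S : Set A), imp a (sInf S) = ⨅ b ∈ S, imp a b
  Sig : Set A
  Sig_upward : ∀ ⦃a b : A⦄, a ∈ Sig → a ≤ b → b ∈ Sig
  Sig_mp : ∀ ⦃a b : A⦄, imp a b ∈ Sig → a ∈ Sig → b ∈ Sig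
  Sig_K : (⨅ a : A, ⨅ b : A, imp a (imp b a)) ∈ Sig
  Sig_S : (⨅ a : A, ⨅ b : A, ⨅ c : A,
      imp (imp a (imp b c)) (imp (imp a b) (imp a c))) ∈ Sig

namespace ImplicativeAlgebra

variable {A : Type u} [CompleteLattice A]

/-- `a × b := ⨅ x, ((a → (b → x)) → x)`. -/
def times (IA : ImplicativeAlgebra A) (a b : A) : A :=
  ⨅ x : A, IA.imp (IA.imp a (IA.imp b x)) x

/-- `a + b := ⨅ x, ((a → x) → ((b → x) → x))`. -/
def plus (IA : ImplicativeAlgebra A) (a b : A) : A :=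
  ⨅ x : A, IA.imp (IA.imp a x) (IA.imp (IA.imp b x) x)

/-- `∃⃗_{i} f i := ⨅ x, ((⨅ i, (f i → x)) → x)`.  (`∀⃗` is just `⨅`.) -/
def aex (IA : ImplicativeAlgebra A) {ι : Sort*} (f : ι → A) : A :=
  ⨅ x : A, IA.imp (⨅ i, IA.imp (f i) x) x

/-- `φ ⊢_{Σ[I]} ψ` iff `⨅ i, (φ i → ψ i) ∈ Σ`. -/
def SigLe (IA : ImplicativeAlgebra A) {ι : Sort*} (f g : ι → A) : Prop :=
  (⨅ i, IA.imp (f i) (g i)) ∈ IA.Sig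

/-- `φ ≡_{Σ[I]} ψ` iff `φ ⊢_{Σ[I]} ψ` and `ψ ⊢_{Σ[I]} φ`. -/
def SigEquiv (IA : ImplicativeAlgebra A) {ι : Sort*} (f g : ι → A) : Prop :=
  IA.SigLe f g ∧ IA.SigLe g f

end ImplicativeAlgebra

/-- Pre-elements of the cumulative hierarchy of partial functions valued in `A`:
an element is an `A`-labelled family of previously constructed elements, i.e. a partial
function (presented by a family indexed by its domain) from earlier elements to `A`. -/
inductive PreW (A : Type u) : Type (u + 1)
  | mk (ι : Type u) (fam : ι → PreW A) (val : ι → A)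

namespace PreW

variable {A : Type u}

/-- The (index type of the) domain of a partial function. -/
def dom : PreW A → Type u
  | ⟨ι, _, _⟩ => ι

/-- The family of elements of the domain. -/
def fam : (w : PreW A) → w.dom → PreW A
  | ⟨_, f, _⟩ => f

/-- The values in `A` of the partial function. -/
def val : (w : PreW A) → w.dom → A
  | ⟨_, _, v⟩ => v

/-- `w` is hereditarily of size `< κ`:  this carves out exactly the elements of the stage
`W_κ` of the hierarchy (for `κ` inaccessible). -/
def HSmall (κ : Cardinal.{u}) : PreW A → Prop
  | ⟨ι, f, _⟩ => Cardinal.mk ι < κ ∧ ∀ i, HSmall κ (f i)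

theorem HSmall.fam {κ : Cardinal.{u}} :
    ∀ {w : PreW A}, w.HSmall κ → ∀ i : w.dom, (w.fam i).HSmall κ
  | ⟨_, _, _⟩, h, i => h.2 i

/-- The rank of an element of the hierarchy. -/
noncomputable def rank : PreW A → Ordinal.{u}
  | ⟨_, f, _⟩ => ⨆ i, Order.succ (rank (f i))

theorem rank_lt_mk {ι : Type u} (f : ι → PreW A) (v : ι → A) (i : ι) :
    (f i).rank < (PreW.mk ι f v).rank := by
  have h : Order.succ (f i).rank ≤ ⨆ j, Order.succ (f j).rank := Ordinal.le_iSup _ i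
  have : (f i).rank < ⨆ j, Order.succ (f j).rank :=
    lt_of_lt_of_le (Order.lt_succ _) h
  simpa [rank] using this

end PreW

namespace ImplicativeAlgebra

variable {A : Type u} [CompleteLattice A]

/-- `α =_W β`, defined by recursion on rank:
`α =_W β := (α ⊆_W β) × (β ⊆_W α)` where
`α ⊆_W β := ∀⃗_{t ∈ dom α} (α t → (fam α t ∈_W β))` and
`γ ∈_W β := ∃⃗_{s ∈ dom β} (β s × (fam β s =_W γ))`. -/
noncomputable def eqW (IA : ImplicativeAlgebra A) : PreW A → PreW A → A
  | ⟨ι₁, f₁, v₁⟩, ⟨ι₂, f₂, v₂⟩ =>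
    IA.times
      (⨅ t : ι₁, IA.imp (v₁ t)
        (IA.aex fun s : ι₂ => IA.times (v₂ s) (IA.eqW (f₂ s) (f₁ t))))
      (⨅ t : ι₂, IA.imp (v₂ t)
        (IA.aex fun s : ι₁ => IA.times (v₁ s) (IA.eqW (f₁ s) (f₂ t))))
termination_by α β => max α.rank β.rank
decreasing_by
  · exact max_lt (lt_max_of_lt_right (PreW.rank_lt_mk f₂ v₂ s))
      (lt_max_of_lt_left (PreW.rank_lt_mk f₁ v₁ t))
  · exact max_lt (lt_max_of_lt_left (PreW.rank_lt_mk f₁ v₁ s))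
      (lt_max_of_lt_right (PreW.rank_lt_mk f₂ v₂ t))

/-- `α ∈_W β := ∃⃗_{s ∈ dom β} (β s × (fam β s =_W α))`. -/
noncomputable def memW (IA : ImplicativeAlgebra A) (α β : PreW A) : A :=
  IA.aex fun s : β.dom => IA.times (β.val s) (IA.eqW (β.fam s) α)

/-- `α ⊆_W β := ∀⃗_{t ∈ dom α} (α t → (fam α t ∈_W β))`. -/
noncomputable def subW (IA : ImplicativeAlgebra A) (α β : PreW A) : A :=
  ⨅ t : α.dom, IA.imp (α.val t) (IA.memW (α.fam t) β)

end ImplicativeAlgebra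

/-- The stage `W = W_κ` of the hierarchy: all hereditarily `< κ`-sized elements. -/
def WSet (A : Type u) (κ : Cardinal.{u}) : Type (u + 1) :=
  {w : PreW A // w.HSmall κ}

/-- An element of the domain of `w ∈ W`, as an element of `W`. -/
def WSet.fam {A : Type u} {κ : Cardinal.{u}} (w : WSet A κ) (i : w.1.dom) : WSet A κ :=
  ⟨w.1.fam i, w.2.fam i⟩

/-- Formulas (in context of length `n`) of the first-order language of set theory, with
(de Bruijn-style) variables `Fin n`, binary predicates `∈` and `=`, connectives `⊥`, `∧`, `∨`,
`→` and quantifiers `∃`, `∀` (binding the last variable of the enlarged context). -/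
inductive SetFormula : ℕ → Type
  | bot {n : ℕ} : SetFormula n
  | mem {n : ℕ} (i j : Fin n) : SetFormula n
  | eq {n : ℕ} (i j : Fin n) : SetFormula n
  | and {n : ℕ} (φ ψ : SetFormula n) : SetFormula n
  | or {n : ℕ} (φ ψ : SetFormula n) : SetFormula n
  | imp {n : ℕ} (φ ψ : SetFormula n) : SetFormula n
  | ex {n : ℕ} (φ : SetFormula (n + 1)) : SetFormula n
  | all {n : ℕ} (φ : SetFormula (n + 1)) : SetFormula n

namespace SetFormula

/-- Renaming of variables (since the only terms of the language of set theory are variables,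
substitution is a special case). -/
def rename : {n m : ℕ} → (Fin n → Fin m) → SetFormula n → SetFormula m
  | _, _, _, .bot => .bot
  | _, _, f, .mem i j => .mem (f i) (f j)
  | _, _, f, .eq i j => .eq (f i) (f j)
  | _, _, f, .and φ ψ => .and (φ.rename f) (ψ.rename f)
  | _, _, f, .or φ ψ => .or (φ.rename f) (ψ.rename f)
  | _, _, f, .imp φ ψ => .imp (φ.rename f) (ψ.rename f)
  | _, _, f, .ex φ => .ex (φ.rename (Fin.snoc (Fin.castSucc ∘ f) (Fin.last _)))
  | _, _, f, .all φ => .all (φ.rename (Fin.snoc (Fin.castSucc ∘ f) (Fin.last _)))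

/-- Universal closure `∀x₁ … ∀xₙ φ` of a formula in context of length `n`. -/
def allClose : {n : ℕ} → SetFormula n → SetFormula 0
  | 0, φ => φ
  | _ + 1, φ => allClose (.all φ)

end SetFormula

namespace ImplicativeAlgebra

variable {A : Type u} [CompleteLattice A]

/-- The interpretation `‖φ[x₁,…,xₙ]‖ : Wⁿ → A` of a formula in context, by recursion on the
structure of `φ`:  atomic formulas are interpreted by `∈_W` and `=_W`, `∧` by `×`, `∨` by `+`,
`→` by `→`, `∃` by `∃⃗` over `W` and `∀` by `∀⃗` (i.e. `⨅`) over `W`. -/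
noncomputable def interp (IA : ImplicativeAlgebra A) (κ : Cardinal.{u}) :
    {n : ℕ} → SetFormula n → (Fin n → WSet A κ) → A
  | _, .bot, _ => ⊥
  | _, .mem i j, v => IA.memW (v i).1 (v j).1
  | _, .eq i j, v => IA.eqW (v i).1 (v j).1
  | _, .and φ ψ, v => IA.times (IA.interp κ φ v) (IA.interp κ ψ v)
  | _, .or φ ψ, v => IA.plus (IA.interp κ φ v) (IA.interp κ ψ v)
  | _, .imp φ ψ, v => IA.imp (IA.interp κ φ v) (IA.interp κ ψ v)
  | _, .ex φ, v => IA.aex fun β : WSet A κ => IA.interp κ φ (Fin.snoc v β)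
  | _, .all φ, v => ⨅ β : WSet A κ, IA.interp κ φ (Fin.snoc v β)

end ImplicativeAlgebra

/-! Application `a · b := ⨅ {c | a ≤ b → c}` is left adjoint to `→`, and `K`, `S` allow bracket
abstraction of polynomials in `·` with coefficients in `Σ`. So `Σ` contains a pairing `P` realizing
`×`, an injection `E` realizing `∃⃗`, and (Curry) a fixed point `ρ ≤ F · ρ` of
`F := λr. P (G r) (G r)`, where `G r := λa. E (P a r)`. By `∈`-induction on `α`: if `ρ` realizes
`t =_W t` for every `t ∈ dom α`, then `G ρ` realizes `α ⊆_W α`, so `F · ρ` realizes `α =_W α`. -/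

namespace ImplicativeAlgebra

variable {A : Type u} [CompleteLattice A] (IA : ImplicativeAlgebra A)

noncomputable def app (a b : A) : A := sInf {c | a ≤ IA.imp b c}

noncomputable def K : A := ⨅ a : A, ⨅ b : A, IA.imp a (IA.imp b a)

noncomputable def S : A := ⨅ a : A, ⨅ b : A, ⨅ c : A,
    IA.imp (IA.imp a (IA.imp b c)) (IA.imp (IA.imp a b) (IA.imp a c))

variable {IA}

theorem le_imp_app (a b : A) : a ≤ IA.imp b (IA.app a b) := by
  rw [app, IA.imp_sInf]
  exact le_iInf₂ fun _ hc => hc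

theorem app_le_iff {a b c : A} : IA.app a b ≤ c ↔ a ≤ IA.imp b c :=
  ⟨fun h => (le_imp_app a b).trans (IA.imp_monotone h), fun h => sInf_le h⟩

theorem app_mono {a a' b b' : A} (ha : a ≤ a') (hb : b ≤ b') : IA.app a b ≤ IA.app a' b' :=
  app_le_iff.2 (ha.trans ((le_imp_app a' b').trans (IA.imp_antitone hb)))

theorem app_mem {a b : A} (ha : a ∈ IA.Sig) (hb : b ∈ IA.Sig) : IA.app a b ∈ IA.Sig :=
  IA.Sig_mp (IA.Sig_upward ha (le_imp_app a b)) hb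

theorem times_mono {a a' b b' : A} (ha : a ≤ a') (hb : b ≤ b') : IA.times a b ≤ IA.times a' b' :=
  iInf_mono fun _ => IA.imp_antitone ((IA.imp_antitone ha).trans
    (IA.imp_monotone (IA.imp_antitone hb)))

theorem K_mem : IA.K ∈ IA.Sig := IA.Sig_K

theorem S_mem : IA.S ∈ IA.Sig := IA.Sig_S

theorem app_app_K_le (a b : A) : IA.app (IA.app IA.K a) b ≤ a :=
  app_le_iff.2 (app_le_iff.2 ((iInf_le _ a).trans (iInf_le _ b)))

theorem app_app_app_S_le (a b c : A) :
    IA.app (IA.app (IA.app IA.S a) b) c ≤ IA.app (IA.app a c) (IA.app b c) := by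
  have ha : a ≤ IA.imp c (IA.imp (IA.app b c) (IA.app (IA.app a c) (IA.app b c))) :=
    (le_imp_app a c).trans (IA.imp_monotone (le_imp_app _ _))
  have hS : IA.S ≤ IA.imp a (IA.imp b (IA.imp c (IA.app (IA.app a c) (IA.app b c)))) :=
    ((iInf_le _ c).trans ((iInf_le _ (IA.app b c)).trans (iInf_le _ _))).trans
      ((IA.imp_antitone ha).trans (IA.imp_monotone (IA.imp_antitone (le_imp_app b c))))
  exact app_le_iff.2 (app_le_iff.2 (app_le_iff.2 hS))

variable (IA) in
/-- Polynomials in `·` with coefficients in `Σ`, in the de Bruijn variables `v.get 0, v.get 1, …`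
of an environment `v`; `Stream'.cons a v` binds a new variable `0` to `a`. -/
inductive IsSigPoly : (Stream' A → A) → Prop
  | var (i : ℕ) : IsSigPoly fun v => v.get i
  | const {c : A} : c ∈ IA.Sig → IsSigPoly fun _ => c
  | app {f g : Stream' A → A} :
      IsSigPoly f → IsSigPoly g → IsSigPoly fun v => IA.app (f v) (g v)

namespace IsSigPoly

theorem mem {f : Stream' A → A} (hf : IsSigPoly IA f) {v : Stream' A}
    (hv : ∀ i, v.get i ∈ IA.Sig) : f v ∈ IA.Sig := by
  induction hf with
  | var i => exact hv i
  | const hc => exact hc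
  | app _ _ ihf ihg => exact app_mem ihf ihg

theorem exists_abs {f : Stream' A → A} (hf : IsSigPoly IA f) :
    ∃ g, IsSigPoly IA g ∧ ∀ v a, IA.app (g v) a ≤ f (Stream'.cons a v) := by
  induction hf with
  | var i =>
    cases i with
    | zero =>
      refine ⟨fun _ => IA.app (IA.app IA.S IA.K) IA.K, .const (app_mem (app_mem S_mem K_mem) K_mem),
        fun _ a => ?_⟩
      exact (app_app_app_S_le _ _ _).trans (app_app_K_le _ _)
    | succ i => exact ⟨fun v => IA.app IA.K (v.get i), .app (.const K_mem) (.var i),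
        fun _ _ => app_app_K_le _ _⟩
  | const hc => exact ⟨fun _ => IA.app IA.K _, .app (.const K_mem) (.const hc),
      fun _ _ => app_app_K_le _ _⟩
  | app _ _ ihf ihg =>
    obtain ⟨f', hf', hff'⟩ := ihf
    obtain ⟨g', hg', hgg'⟩ := ihg
    exact ⟨fun v => IA.app (IA.app IA.S (f' v)) (g' v), .app (.app (.const S_mem) hf') hg',
      fun v a => (app_app_app_S_le _ _ _).trans (app_mono (hff' v a) (hgg' v a))⟩

theorem exists_mem_app_le {f : Stream' A → A} (hf : IsSigPoly IA f) {v : Stream' A}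
    (hv : ∀ i, v.get i ∈ IA.Sig) :
    ∃ c ∈ IA.Sig, ∀ a, IA.app c a ≤ f (Stream'.cons a v) :=
  let ⟨g, hg, hgf⟩ := hf.exists_abs
  ⟨g v, hg.mem hv, hgf v⟩

theorem exists_mem_app_app_le {f : Stream' A → A} (hf : IsSigPoly IA f) {v : Stream' A}
    (hv : ∀ i, v.get i ∈ IA.Sig) :
    ∃ c ∈ IA.Sig, ∀ a b, IA.app (IA.app c a) b ≤ f (Stream'.cons b (Stream'.cons a v)) :=
  let ⟨_, hg, hgf⟩ := hf.exists_abs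
  let ⟨c, hc, hcg⟩ := hg.exists_mem_app_le hv
  ⟨c, hc, fun a b => (app_mono (hcg a) le_rfl).trans (hgf _ b)⟩

theorem exists_mem_app_app_app_le {f : Stream' A → A} (hf : IsSigPoly IA f) {v : Stream' A}
    (hv : ∀ i, v.get i ∈ IA.Sig) :
    ∃ c ∈ IA.Sig, ∀ a b d, IA.app (IA.app (IA.app c a) b) d ≤
      f (Stream'.cons d (Stream'.cons b (Stream'.cons a v))) :=
  let ⟨_, hg, hgf⟩ := hf.exists_abs
  let ⟨c, hc, hcg⟩ := hg.exists_mem_app_app_le hv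
  ⟨c, hc, fun a b d => (app_mono (hcg a b) le_rfl).trans (hgf _ d)⟩

end IsSigPoly

theorem top_mem : (⊤ : A) ∈ IA.Sig := IA.Sig_upward K_mem le_top

theorem get_const_top_mem (i : ℕ) : (Stream'.const (⊤ : A)).get i ∈ IA.Sig := top_mem

theorem exists_mem_app_app_le_times :
    ∃ p ∈ IA.Sig, ∀ a b, IA.app (IA.app p a) b ≤ IA.times a b := by
  obtain ⟨p, hp, hpab⟩ := (IsSigPoly.app (.app (.var 0) (.var 2)) (.var 1)
    ).exists_mem_app_app_app_le (IA := IA) get_const_top_mem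
  refine ⟨p, hp, fun a b => le_iInf fun x => app_le_iff.1 ?_⟩
  exact (hpab a b _).trans (app_le_iff.2 (app_le_iff.2 le_rfl))

theorem exists_mem_app_le_aex :
    ∃ e ∈ IA.Sig, ∀ {ι : Sort*} (f : ι → A) (t : ι), IA.app e (f t) ≤ IA.aex f := by
  obtain ⟨e, he, hemk⟩ := (IsSigPoly.app (.var 0) (.var 1)).exists_mem_app_app_le
    (IA := IA) get_const_top_mem
  refine ⟨e, he, fun f t => le_iInf fun x => app_le_iff.1 ?_⟩
  exact (hemk _ _).trans (app_le_iff.2 (iInf_le _ t))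

theorem exists_mem_le_app_self {F : A} (hF : F ∈ IA.Sig) :
    ∃ ρ ∈ IA.Sig, ρ ≤ IA.app F ρ := by
  obtain ⟨ω, hω, hωx⟩ := (IsSigPoly.app (.const hF) (.app (.var 0) (.var 0))).exists_mem_app_le
    (IA := IA) get_const_top_mem
  exact ⟨IA.app ω ω, app_mem hω hω, hωx ω⟩

theorem exists_mem_le_eqW_self : ∃ ρ ∈ IA.Sig, ∀ α : PreW A, ρ ≤ IA.eqW α α := by
  obtain ⟨p, hp, hpair⟩ := exists_mem_app_app_le_times (IA := IA)
  obtain ⟨e, he, hinj⟩ := exists_mem_app_le_aex (IA := IA)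
  obtain ⟨G, hG, hGra⟩ := (IsSigPoly.app (.const he) (.app (.app (.const hp) (.var 0)) (.var 1))
    ).exists_mem_app_app_le (IA := IA) get_const_top_mem
  obtain ⟨F, hF, hFr⟩ := (IsSigPoly.app (.app (.const hp) (.app (.const hG) (.var 0)))
    (.app (.const hG) (.var 0))).exists_mem_app_le (IA := IA) get_const_top_mem
  obtain ⟨ρ, hρ, hρF⟩ := exists_mem_le_app_self hF
  refine ⟨ρ, hρ, fun α => ?_⟩
  induction α with
  | mk ι f v ih =>
    have hsub : IA.app G ρ ≤ ⨅ t, IA.imp (v t)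
        (IA.aex fun s => IA.times (v s) (IA.eqW (f s) (f t))) :=
      le_iInf fun t => app_le_iff.1 <| calc
        IA.app (IA.app G ρ) (v t) ≤ IA.app e (IA.app (IA.app p (v t)) ρ) := hGra ρ (v t)
        _ ≤ IA.app e (IA.times (v t) (IA.eqW (f t) (f t))) :=
          app_mono le_rfl ((hpair _ _).trans (times_mono le_rfl (ih t)))
        _ ≤ _ := hinj (fun s => IA.times (v s) (IA.eqW (f s) (f t))) t
    rw [eqW]
    calc ρ ≤ IA.app F ρ := hρF
      _ ≤ IA.app (IA.app p (IA.app G ρ)) (IA.app G ρ) := hFr ρ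
      _ ≤ _ := (hpair _ _).trans (times_mono hsub hsub)

end ImplicativeAlgebra

theorem stmt0_general {A : Type u} [CompleteLattice A] (IA : ImplicativeAlgebra A)
    (κ : Cardinal.{u}) :
    ∃ ρ ∈ IA.Sig, ρ ≤ ⨅ α : WSet A κ, IA.eqW α.1 α.1 :=
  let ⟨ρ, hρ, hρα⟩ := IA.exists_mem_le_eqW_self
  ⟨ρ, hρ, le_iInf fun α => hρα α.1⟩

theorem stmt0 {A : Type u} [CompleteLattice A] (IA : ImplicativeAlgebra A)
    (κ : Cardinal.{u}) (hκ : κ.IsInaccessible) (hA : Cardinal.mk A < κ) :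
    ∃ ρ ∈ IA.Sig, ρ ≤ ⨅ α : WSet A κ, IA.eqW α.1 α.1 :=
  stmt0_general IA κ
end

section
/- Let 𝔸 = (A, ≤, →, Σ) be an implicative algebra with |A| < κ for a strongly inaccessible cardinal κ, and let W, ∈_W, =_W and the interpretation ‖·‖ be as defined below. For every formula in context φ[x̄, y, z] with x̄ of length n, writing ∀z∈y φ for ∀z(z ∈ y → φ): ‖∀z∈y φ [x̄, y]‖ ≡_{Σ[W^{n+1}]} the function (ᾱ, β) ↦ ∀⃗_{u∈dom(β)} (β(u) → ‖φ[x̄, y, z]‖(ᾱ, β, u)). -/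
/-!
A family `b` indexed by `ι` is entailed by a context `Γ` when a single combinatory term with
constants in `Σ` realizes `Γ i ⊢ b i` at every index `i`; by combinatory completeness (bracket
abstraction with `K` and `S`) these uniform entailments are closed under the rules of natural
deduction for `→`, `×`, `+`, `∃⃗` and `∀⃗`. Reflexivity and transitivity of `=_W` are proved
by well-founded recursion on rank, realized by Turing's fixpoint combinator, and from them
every formula respects `=_W` (Leibniz's law).

The bounded quantifier then agrees with its restriction to the domain of `y`: one direction
instantiates `z` at the members `u` of `y`, where `u ∈_W y` holds by reflexivity; the other
unfolds `z ∈_W y` to some `u` with `y u` and `u =_W z` and transports `φ` along that equality.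
-/

universe u

universe v w

inductive CombTerm (A : Type u) : ℕ → Type u
  | var {n : ℕ} (i : Fin n) : CombTerm A n
  | const {n : ℕ} (a : A) : CombTerm A n
  | app {n : ℕ} (t s : CombTerm A n) : CombTerm A n

def CombTerm.rename {A : Type u} {n m : ℕ} (σ : Fin n → Fin m) : CombTerm A n → CombTerm A m
  | .var i => .var (σ i)
  | .const a => .const a
  | .app t s => .app (t.rename σ) (s.rename σ)

/-- The body `f (x x f)` of Turing's fixpoint combinator `θ := λx f. f (x x f)`. -/
def CombTerm.turingBody {A : Type u} : CombTerm A 2 :=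
  .app (.var 1) (.app (.app (.var 0) (.var 0)) (.var 1))

theorem PreW.fam_rank_lt {A : Type u} : ∀ (α : PreW A) (i : α.dom), (α.fam i).rank < α.rank
  | ⟨_, f, v⟩, i => PreW.rank_lt_mk f v i

namespace ImplicativeAlgebra

variable {A : Type u} [CompleteLattice A]

section Combinators

variable (IA : ImplicativeAlgebra A)

/-- The application `a b` of an implicative algebra. -/
noncomputable def ap (a b : A) : A := sInf {x | a ≤ IA.imp b x}

theorem le_imp_ap (a b : A) : a ≤ IA.imp b (IA.ap a b) := by
  rw [ap, IA.imp_sInf]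
  exact le_iInf₂ fun _ hx => hx

theorem ap_le {a b c : A} (h : a ≤ IA.imp b c) : IA.ap a b ≤ c := sInf_le h

theorem ap_le_of_le_imp {a b b' c : A} (h : a ≤ IA.imp b c) (hb : b' ≤ b) : IA.ap a b' ≤ c :=
  IA.ap_le (h.trans (IA.imp_antitone hb))

theorem ap_mem {a b : A} (ha : a ∈ IA.Sig) (hb : b ∈ IA.Sig) : IA.ap a b ∈ IA.Sig :=
  IA.Sig_mp (IA.Sig_upward ha (IA.le_imp_ap a b)) hb

def combK : A := ⨅ a : A, ⨅ b : A, IA.imp a (IA.imp b a)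

def combS : A := ⨅ a : A, ⨅ b : A, ⨅ c : A,
  IA.imp (IA.imp a (IA.imp b c)) (IA.imp (IA.imp a b) (IA.imp a c))

theorem combK_le (a b : A) : IA.combK ≤ IA.imp a (IA.imp b a) :=
  (iInf_le _ a).trans (iInf_le _ b)

theorem combS_le (a b c : A) :
    IA.combS ≤ IA.imp (IA.imp a (IA.imp b c)) (IA.imp (IA.imp a b) (IA.imp a c)) :=
  ((iInf_le _ a).trans (iInf_le _ b)).trans (iInf_le _ c)

noncomputable def eval {n : ℕ} (ρ : Fin n → A) : CombTerm A n → A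
  | .var i => ρ i
  | .const a => a
  | .app t s => IA.ap (eval ρ t) (eval ρ s)

def ConstsInSig {n : ℕ} : CombTerm A n → Prop
  | .var _ => True
  | .const a => a ∈ IA.Sig
  | .app t s => ConstsInSig t ∧ ConstsInSig s

theorem eval_mem {n : ℕ} {ρ : Fin n → A} (hρ : ∀ k, ρ k ∈ IA.Sig) :
    ∀ {t : CombTerm A n}, IA.ConstsInSig t → IA.eval ρ t ∈ IA.Sig
  | .var i, _ => hρ i
  | .const _, h => h
  | .app _ _, h => IA.ap_mem (eval_mem hρ h.1) (eval_mem hρ h.2)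

theorem eval_rename {n m : ℕ} (σ : Fin n → Fin m) (ρ : Fin m → A) :
    ∀ t : CombTerm A n, IA.eval ρ (t.rename σ) = IA.eval (ρ ∘ σ) t
  | .var _ => rfl
  | .const _ => rfl
  | .app t s => by simp only [CombTerm.rename, eval, eval_rename σ ρ t, eval_rename σ ρ s]

theorem ConstsInSig.rename {n m : ℕ} (σ : Fin n → Fin m) :
    ∀ {t : CombTerm A n}, IA.ConstsInSig t → IA.ConstsInSig (t.rename σ)
  | .var _, _ => trivial
  | .const _, h => h
  | .app _ _, h => ⟨h.1.rename σ, h.2.rename σ⟩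

/-- Bracket abstraction of the last variable, with `I := S K K`. -/
noncomputable def abstr {n : ℕ} : CombTerm A (n + 1) → CombTerm A n
  | .var i => Fin.lastCases (.app (.app (.const IA.combS) (.const IA.combK)) (.const IA.combK))
      (fun j => .app (.const IA.combK) (.var j)) i
  | .const a => .app (.const IA.combK) (.const a)
  | .app t s => .app (.app (.const IA.combS) (abstr t)) (abstr s)

theorem ConstsInSig.abstr {n : ℕ} :
    ∀ {t : CombTerm A (n + 1)}, IA.ConstsInSig t → IA.ConstsInSig (IA.abstr t)
  | .var i, _ => by
    induction i using Fin.lastCases <;>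
      simp [ImplicativeAlgebra.abstr, ConstsInSig, IA.Sig_K, IA.Sig_S, combK, combS]
  | .const _, h => ⟨IA.Sig_K, h⟩
  | .app _ _, h => ⟨⟨IA.Sig_S, h.1.abstr⟩, h.2.abstr⟩

theorem eval_abstr_le {n : ℕ} (ρ : Fin n → A) (a : A) :
    ∀ t : CombTerm A (n + 1), IA.eval ρ (IA.abstr t) ≤ IA.imp a (IA.eval (Fin.snoc ρ a) t)
  | .var i => by
    induction i using Fin.lastCases with
    | last =>
      simp only [abstr, Fin.lastCases_last, eval, Fin.snoc_last]
      exact IA.ap_le_of_le_imp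
        (IA.ap_le_of_le_imp (IA.combS_le a (IA.imp a a) a) (IA.combK_le a (IA.imp a a)))
        (IA.combK_le a a)
    | cast j =>
      simp only [abstr, Fin.lastCases_castSucc, eval, Fin.snoc_castSucc]
      exact IA.ap_le (IA.combK_le (ρ j) a)
  | .const b => IA.ap_le (IA.combK_le b a)
  | .app t s => by
    set T := IA.eval (Fin.snoc ρ a) t
    set U := IA.eval (Fin.snoc ρ a) s
    have ht : IA.eval ρ (IA.abstr t) ≤ IA.imp a (IA.imp U (IA.ap T U)) :=
      (eval_abstr_le ρ a t).trans (IA.imp_monotone (IA.le_imp_ap T U))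
    exact IA.ap_le_of_le_imp (IA.ap_le_of_le_imp (IA.combS_le a U (IA.ap T U)) ht)
      (eval_abstr_le ρ a s)

noncomputable def turing : A := IA.eval ![] (IA.abstr (IA.abstr CombTerm.turingBody))

theorem turing_mem : IA.turing ∈ IA.Sig :=
  have h : IA.ConstsInSig (CombTerm.turingBody (A := A)) := ⟨trivial, ⟨trivial, trivial⟩, trivial⟩
  IA.eval_mem (fun k => k.elim0) ((h.abstr IA).abstr IA)

theorem turing_fixpoint (f : A) :
    IA.ap (IA.ap IA.turing IA.turing) f ≤ IA.ap f (IA.ap (IA.ap IA.turing IA.turing) f) :=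
  IA.ap_le <| (IA.ap_le (IA.eval_abstr_le _ _ _)).trans (IA.eval_abstr_le _ _ _)

/-- `Γ ⊢ b` uniformly in `i : ι`: one combinatory term with constants in `Σ`, evaluated at any
`ρ ≤ Γ · i`, lies below `b i`. -/
def Entails {ι : Type v} {n : ℕ} (Γ : Fin n → ι → A) (b : ι → A) : Prop :=
  ∃ t : CombTerm A n, IA.ConstsInSig t ∧
    ∀ (i : ι) (ρ : Fin n → A), (∀ k, ρ k ≤ Γ k i) → IA.eval ρ t ≤ b i

end Combinators

variable {IA : ImplicativeAlgebra A}

namespace Entails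

variable {ι : Type v} {ι' : Type w} {n : ℕ} {Γ : Fin n → ι → A} {a b c : ι → A}

theorem hyp (k : Fin n) (h : ∀ i, Γ k i ≤ b i) : IA.Entails Γ b :=
  ⟨.var k, trivial, fun i _ hρ => (hρ k).trans (h i)⟩

theorem var_last : IA.Entails (Fin.snoc Γ a) a :=
  hyp (Fin.last n) fun i => by rw [Fin.snoc_last]

theorem const {e : A} (he : e ∈ IA.Sig) (h : ∀ i, e ≤ b i) : IA.Entails Γ b :=
  ⟨.const e, he, fun i _ _ => h i⟩

theorem mono (d : IA.Entails Γ a) (h : ∀ i, a i ≤ b i) : IA.Entails Γ b :=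
  let ⟨t, ht, hd⟩ := d
  ⟨t, ht, fun i ρ hρ => (hd i ρ hρ).trans (h i)⟩

theorem app (df : IA.Entails Γ fun i => IA.imp (a i) (b i)) (da : IA.Entails Γ a) :
    IA.Entails Γ b :=
  let ⟨t, ht, hdt⟩ := df
  let ⟨s, hs, hds⟩ := da
  ⟨.app t s, ⟨ht, hs⟩, fun i ρ hρ => IA.ap_le_of_le_imp (hdt i ρ hρ) (hds i ρ hρ)⟩

theorem lam (d : IA.Entails (Fin.snoc Γ a) b) : IA.Entails Γ fun i => IA.imp (a i) (b i) := by
  obtain ⟨t, ht, hd⟩ := d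
  refine ⟨IA.abstr t, ht.abstr IA, fun i ρ hρ => ?_⟩
  refine (IA.eval_abstr_le ρ (a i) t).trans (IA.imp_monotone (hd i _ fun k => ?_))
  induction k using Fin.lastCases <;> simp [hρ]

theorem rename {m : ℕ} {Δ : Fin m → ι' → A} (g : ι' → ι) (σ : Fin n → Fin m)
    (h : ∀ k i, Δ (σ k) i ≤ Γ k (g i)) (d : IA.Entails Γ b) :
    IA.Entails Δ fun i => b (g i) :=
  let ⟨t, ht, hd⟩ := d
  ⟨t.rename σ, ht.rename IA σ, fun i ρ hρ => by
    rw [IA.eval_rename]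
    exact hd (g i) (ρ ∘ σ) fun k => (hρ (σ k)).trans (h k i)⟩

theorem wk (d : IA.Entails Γ b) : IA.Entails (Fin.snoc Γ a) b :=
  d.rename id Fin.castSucc fun k i => by rw [Fin.snoc_castSucc]; rfl

theorem comp (g : ι' → ι) (d : IA.Entails Γ b) :
    IA.Entails (fun k i => Γ k (g i)) fun i => b (g i) :=
  d.rename g id fun _ _ => le_rfl

theorem lift {J : ι → Type w} {a' : (Σ i, J i) → A} (d : IA.Entails Γ b) :
    IA.Entails (Fin.snoc (fun k (p : Σ i, J i) => Γ k p.1) a') fun p => b p.1 :=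
  (d.comp Sigma.fst).wk

theorem lift₂ {J : ι → Type w} {a' b' : (Σ i, J i) → A} (d : IA.Entails Γ b) :
    IA.Entails (Fin.snoc (Fin.snoc (fun k (p : Σ i, J i) => Γ k p.1) a') b') fun p => b p.1 :=
  (d.comp Sigma.fst).wk.wk

theorem of_nil {J : Type w} {f : J → A} (d : IA.Entails ![] f) (g : ι → J) :
    IA.Entails Γ fun i => f (g i) :=
  d.rename g Fin.elim0 fun k => k.elim0

theorem inf {J : ι → Type w} {c : ∀ i, J i → A}
    (d : IA.Entails (fun k (p : Σ i, J i) => Γ k p.1) fun p => c p.1 p.2) :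
    IA.Entails Γ fun i => ⨅ j, c i j :=
  let ⟨t, ht, hd⟩ := d
  ⟨t, ht, fun i ρ hρ => le_iInf fun j => hd ⟨i, j⟩ ρ hρ⟩

theorem times_intro (da : IA.Entails Γ a) (db : IA.Entails Γ b) :
    IA.Entails Γ fun i => IA.times (a i) (b i) :=
  inf <| lam <| app (app var_last da.lift) db.lift

theorem times_elim (d : IA.Entails Γ fun i => IA.times (a i) (b i))
    (k : IA.Entails Γ fun i => IA.imp (a i) (IA.imp (b i) (c i))) : IA.Entails Γ c :=
  (d.mono fun i => iInf_le _ (c i)).app k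

theorem fst (d : IA.Entails Γ fun i => IA.times (a i) (b i)) : IA.Entails Γ a :=
  d.times_elim (lam (lam var_last.wk))

theorem snd (d : IA.Entails Γ fun i => IA.times (a i) (b i)) : IA.Entails Γ b :=
  d.times_elim (lam (lam var_last))

theorem aex_intro {J : ι → Type w} {f : ∀ i, J i → A} (j : ∀ i, J i)
    (d : IA.Entails Γ fun i => f i (j i)) : IA.Entails Γ fun i => IA.aex (f i) :=
  inf <| lam <| app (var_last.mono fun p => iInf_le _ (j p.1)) d.lift

theorem aex_elim {J : ι → Type w} {f : ∀ i, J i → A}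
    (d : IA.Entails Γ fun i => IA.aex (f i))
    (k : IA.Entails (fun k (p : Σ i, J i) => Γ k p.1) fun p => IA.imp (f p.1 p.2) (c p.1)) :
    IA.Entails Γ c :=
  (d.mono fun i => iInf_le _ (c i)).app (inf k)

theorem plus_inl (da : IA.Entails Γ a) : IA.Entails Γ fun i => IA.plus (a i) (b i) :=
  inf <| lam <| lam <| app var_last.wk da.lift₂

theorem plus_inr (db : IA.Entails Γ b) : IA.Entails Γ fun i => IA.plus (a i) (b i) :=
  inf <| lam <| lam <| app var_last db.lift₂

theorem plus_elim (d : IA.Entails Γ fun i => IA.plus (a i) (b i))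
    (ka : IA.Entails (Fin.snoc Γ a) c) (kb : IA.Entails (Fin.snoc Γ b) c) : IA.Entails Γ c :=
  ((d.mono fun i => iInf_le _ (c i)).app (lam ka)).app (lam kb)

theorem iInf_mem (d : IA.Entails ![] b) : (⨅ i, b i) ∈ IA.Sig :=
  let ⟨_, ht, hd⟩ := d
  IA.Sig_upward (IA.eval_mem (ρ := ![]) (fun k => k.elim0) ht)
    (le_iInf fun i => hd i ![] fun k => k.elim0)

theorem fix {r : ι → ι → Prop} (hr : WellFounded r) {g : ι → A}
    (step : IA.Entails ![] fun i => IA.imp (⨅ j : {j // r j i}, g j) (g i)) :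
    IA.Entails ![] g := by
  refine const (IA.ap_mem (IA.ap_mem IA.turing_mem IA.turing_mem) step.iInf_mem) fun i => ?_
  induction i using hr.induction with
  | _ i ih =>
    exact (IA.turing_fixpoint _).trans
      (IA.ap_le_of_le_imp (iInf_le _ i) (le_iInf fun j => ih j j.2))

end Entails

theorem sigLe_of_entails {ι : Type v} {a b : ι → A} (d : IA.Entails (Fin.snoc ![] a) b) :
    IA.SigLe a b :=
  d.lam.iInf_mem

theorem eqW_eq_times (α β : PreW A) :
    IA.eqW α β = IA.times (IA.subW α β) (IA.subW β α) := by
  cases α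
  cases β
  rw [eqW]
  rfl

namespace Entails

variable {ι : Type v} {n : ℕ} {Γ : Fin n → ι → A} {x y z : ι → PreW A}

theorem memW_intro (s : ∀ i, (y i).dom) (hv : IA.Entails Γ fun i => (y i).val (s i))
    (he : IA.Entails Γ fun i => IA.eqW ((y i).fam (s i)) (x i)) :
    IA.Entails Γ fun i => IA.memW (x i) (y i) :=
  aex_intro s (hv.times_intro he)

theorem memW_elim {c : ι → A} (h : IA.Entails Γ fun i => IA.memW (x i) (y i))
    (k : IA.Entails (Fin.snoc (Fin.snoc (fun k (p : Σ i, (y i).dom) => Γ k p.1)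
        fun p => (y p.1).val p.2) fun p => IA.eqW ((y p.1).fam p.2) (x p.1)) fun p => c p.1) :
    IA.Entails Γ c :=
  aex_elim h (lam (times_elim var_last (lam (lam k)).wk))

theorem subW_intro (h : IA.Entails (Fin.snoc (fun k (p : Σ i, (x i).dom) => Γ k p.1)
      fun p => (x p.1).val p.2) fun p => IA.memW ((x p.1).fam p.2) (y p.1)) :
    IA.Entails Γ fun i => IA.subW (x i) (y i) :=
  inf (lam h)

theorem subW_elim (h : IA.Entails Γ fun i => IA.subW (x i) (y i)) (t : ∀ i, (x i).dom)
    (hv : IA.Entails Γ fun i => (x i).val (t i)) :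
    IA.Entails Γ fun i => IA.memW ((x i).fam (t i)) (y i) :=
  (h.mono fun i => iInf_le _ (t i)).app hv

theorem eqW_intro (hxy : IA.Entails Γ fun i => IA.subW (x i) (y i))
    (hyx : IA.Entails Γ fun i => IA.subW (y i) (x i)) :
    IA.Entails Γ fun i => IA.eqW (x i) (y i) :=
  (hxy.times_intro hyx).mono fun _ => (eqW_eq_times _ _).ge

theorem subW_of_eqW (h : IA.Entails Γ fun i => IA.eqW (x i) (y i)) :
    IA.Entails Γ fun i => IA.subW (x i) (y i) :=
  (h.mono fun _ => (eqW_eq_times _ _).le).fst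

theorem subW_of_eqW' (h : IA.Entails Γ fun i => IA.eqW (x i) (y i)) :
    IA.Entails Γ fun i => IA.subW (y i) (x i) :=
  (h.mono fun _ => (eqW_eq_times _ _).le).snd

theorem eqW_symm (h : IA.Entails Γ fun i => IA.eqW (x i) (y i)) :
    IA.Entails Γ fun i => IA.eqW (y i) (x i) :=
  eqW_intro h.subW_of_eqW' h.subW_of_eqW

theorem subW_trans
    (htr : IA.Entails Γ fun i => ⨅ (t : (x i).dom) (s : (y i).dom) (w : (z i).dom),
      IA.imp (IA.eqW ((z i).fam w) ((y i).fam s))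
        (IA.imp (IA.eqW ((y i).fam s) ((x i).fam t)) (IA.eqW ((z i).fam w) ((x i).fam t))))
    (hxy : IA.Entails Γ fun i => IA.subW (x i) (y i))
    (hyz : IA.Entails Γ fun i => IA.subW (y i) (z i)) :
    IA.Entails Γ fun i => IA.subW (x i) (z i) :=
  subW_intro <| memW_elim (hxy.lift.subW_elim (fun p => p.2) var_last) <|
    memW_elim (hyz.lift.lift₂.subW_elim (fun q => q.2) var_last.wk) <|
      memW_intro (fun r => r.2) var_last.wk <|
        ((htr.lift.lift₂.lift₂.mono fun r =>
          iInf_le_of_le r.1.1.2 (iInf_le_of_le r.1.2 (iInf_le _ r.2))).app var_last).app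
          var_last.lift₂

end Entails

section

open Entails

theorem entails_eqW_refl : IA.Entails ![] fun α : PreW A => IA.eqW α α := by
  refine Entails.fix (InvImage.wf PreW.rank wellFounded_lt) (lam (eqW_intro ?h ?h))
  exact subW_intro <| memW_intro (fun p => p.2) var_last <|
    var_last.lift.mono fun p => iInf_le_of_le ⟨p.1.fam p.2, p.1.fam_rank_lt p.2⟩ le_rfl

/-- The induction is on the rank of the middle term, which every recursive call replaces by one
of its members. -/
theorem entails_eqW_trans : IA.Entails ![] fun p : PreW A × PreW A × PreW A =>
    IA.imp (IA.eqW p.1 p.2.1) (IA.imp (IA.eqW p.2.1 p.2.2) (IA.eqW p.1 p.2.2)) := by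
  refine Entails.fix (InvImage.wf (fun p : PreW A × PreW A × PreW A => p.2.1.rank)
    wellFounded_lt) (lam (lam (lam ?_)))
  refine eqW_intro (subW_trans ?_ var_last.wk.subW_of_eqW var_last.subW_of_eqW)
    (subW_trans ?_ var_last.subW_of_eqW' var_last.wk.subW_of_eqW')
  · exact var_last.wk.wk.mono fun p => le_iInf fun t => le_iInf fun s => le_iInf fun w =>
      iInf_le_of_le ⟨(p.2.2.fam w, p.2.1.fam s, p.1.fam t), p.2.1.fam_rank_lt s⟩ le_rfl
  · exact var_last.wk.wk.mono fun p => le_iInf fun t => le_iInf fun s => le_iInf fun w =>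
      iInf_le_of_le ⟨(p.1.fam w, p.2.1.fam s, p.2.2.fam t), p.2.1.fam_rank_lt s⟩ le_rfl

end

namespace Entails

variable {ι : Type v} {n : ℕ} {Γ : Fin n → ι → A} {x x' y y' z : ι → PreW A}

theorem eqW_refl (x : ι → PreW A) : IA.Entails Γ fun i => IA.eqW (x i) (x i) :=
  entails_eqW_refl.of_nil x

theorem eqW_trans (hxy : IA.Entails Γ fun i => IA.eqW (x i) (y i))
    (hyz : IA.Entails Γ fun i => IA.eqW (y i) (z i)) :
    IA.Entails Γ fun i => IA.eqW (x i) (z i) :=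
  ((entails_eqW_trans.of_nil fun i => (x i, y i, z i)).app hxy).app hyz

theorem memW_congr_left (he : IA.Entails Γ fun i => IA.eqW (x i) (x' i))
    (hm : IA.Entails Γ fun i => IA.memW (x i) (y i)) :
    IA.Entails Γ fun i => IA.memW (x' i) (y i) :=
  memW_elim hm <| memW_intro (fun p => p.2) var_last.wk (eqW_trans var_last he.lift₂)

theorem memW_congr_right (he : IA.Entails Γ fun i => IA.eqW (y i) (y' i))
    (hm : IA.Entails Γ fun i => IA.memW (x i) (y i)) :
    IA.Entails Γ fun i => IA.memW (x i) (y' i) :=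
  memW_elim hm <| memW_elim (he.subW_of_eqW.lift₂.subW_elim (fun p => p.2) var_last.wk) <|
    memW_intro (fun q => q.2) var_last.wk (eqW_trans var_last var_last.lift₂)

theorem iInf_dom_of_ball {κ : Cardinal.{u}} {y : ι → WSet A κ} {P : ι → WSet A κ → A}
    (h : IA.Entails Γ fun i => ⨅ β : WSet A κ, IA.imp (IA.memW β.1 (y i).1) (P i β)) :
    IA.Entails Γ fun i => ⨅ u : (y i).1.dom, IA.imp ((y i).1.val u) (P i ((y i).fam u)) :=
  inf <| lam <| app (a := fun p => IA.memW ((y p.1).fam p.2).1 (y p.1).1)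
    (h.lift.mono fun p => iInf_le _ ((y p.1).fam p.2))
    (memW_intro (fun p => p.2) var_last (eqW_refl _))

end Entails

variable {κ : Cardinal.{u}}

theorem interp_ball {n : ℕ} (φ : SetFormula (n + 2)) (v : Fin (n + 1) → WSet A κ) :
    IA.interp κ (.all ((SetFormula.mem (Fin.last (n + 1)) (Fin.last n).castSucc).imp φ)) v =
      ⨅ β : WSet A κ, IA.imp (IA.memW β.1 (v (Fin.last n)).1) (IA.interp κ φ (Fin.snoc v β)) := by
  simp only [interp]
  simp only [Fin.snoc_last, Fin.snoc_castSucc]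

namespace Entails

variable {ι : Type (u + 1)} {n m : ℕ} {Γ : Fin n → ι → A}

theorem eqW_update {v : ι → Fin m → WSet A κ} {δ γ : ι → WSet A κ} (j k : Fin m)
    (he : IA.Entails Γ fun i => IA.eqW (δ i).1 (γ i).1) :
    IA.Entails Γ fun i =>
      IA.eqW (Function.update (v i) j (δ i) k).1 (Function.update (v i) j (γ i) k).1 := by
  by_cases hk : k = j
  · subst hk
    simpa only [Function.update_self] using he
  · simpa only [Function.update_of_ne hk] using eqW_refl fun i => (v i k).1

theorem interp_update (φ : SetFormula m) (j : Fin m) {v : ι → Fin m → WSet A κ}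
    {δ γ : ι → WSet A κ} (he : IA.Entails Γ fun i => IA.eqW (δ i).1 (γ i).1)
    (h : IA.Entails Γ fun i => IA.interp κ φ (Function.update (v i) j (δ i))) :
    IA.Entails Γ fun i => IA.interp κ φ (Function.update (v i) j (γ i)) := by
  induction φ generalizing ι n Γ δ γ with
  | bot => exact h
  | mem a b => exact memW_congr_right (eqW_update j b he) (memW_congr_left (eqW_update j a he) h)
  | eq a b => exact eqW_trans (eqW_trans (eqW_update j a he).eqW_symm h) (eqW_update j b he)
  | and φ ψ ihφ ihψ => exact times_intro (ihφ j he h.fst) (ihψ j he h.snd)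
  | or φ ψ ihφ ihψ =>
    exact plus_elim h (plus_inl (ihφ j he.wk var_last)) (plus_inr (ihψ j he.wk var_last))
  | imp φ ψ ihφ ihψ => exact lam (ihψ j he.wk (h.wk.app (ihφ j he.eqW_symm.wk var_last)))
  | ex φ ih =>
    simp only [interp, Fin.snoc_update] at h ⊢
    exact aex_elim h (lam (aex_intro (fun p => p.2) (ih j.castSucc he.lift var_last)))
  | all φ ih =>
    simp only [interp, Fin.snoc_update] at h ⊢
    exact inf (ih j.castSucc (he.comp Sigma.fst) ((h.comp Sigma.fst).mono fun p => iInf_le _ p.2))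

theorem interp_snoc_congr (φ : SetFormula (m + 1)) {v : ι → Fin m → WSet A κ} {δ γ : ι → WSet A κ}
    (he : IA.Entails Γ fun i => IA.eqW (δ i).1 (γ i).1)
    (h : IA.Entails Γ fun i => IA.interp κ φ (Fin.snoc (v i) (δ i))) :
    IA.Entails Γ fun i => IA.interp κ φ (Fin.snoc (v i) (γ i)) := by
  simpa only [Fin.update_snoc_last] using interp_update φ (Fin.last m)
    (v := fun i => Fin.snoc (v i) (δ i)) he (by simpa only [Fin.update_snoc_last] using h)

theorem ball_of_iInf_dom (φ : SetFormula (m + 1)) {v : ι → Fin m → WSet A κ} {y : ι → WSet A κ}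
    (h : IA.Entails Γ fun i => ⨅ u : (y i).1.dom,
      IA.imp ((y i).1.val u) (IA.interp κ φ (Fin.snoc (v i) ((y i).fam u)))) :
    IA.Entails Γ fun i => ⨅ β : WSet A κ,
      IA.imp (IA.memW β.1 (y i).1) (IA.interp κ φ (Fin.snoc (v i) β)) :=
  inf <| lam <| memW_elim (x := fun p => p.2.1) (y := fun p => (y p.1).1) var_last <|
    interp_snoc_congr φ var_last ((h.lift.lift₂.mono fun q => iInf_le _ q.2).app var_last.wk)

end Entails

end ImplicativeAlgebra

theorem stmt9_general {A : Type u} [CompleteLattice A] (IA : ImplicativeAlgebra A)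
    (κ : Cardinal.{u}) (n : ℕ) (φ : SetFormula (n + 2)) :
    IA.SigEquiv
      (fun v : Fin (n + 1) → WSet A κ =>
        IA.interp κ
          (SetFormula.all
            ((SetFormula.mem (Fin.last (n + 1)) ((Fin.last n).castSucc)).imp φ)) v)
      (fun v : Fin (n + 1) → WSet A κ =>
        ⨅ u : (v (Fin.last n)).1.dom,
          IA.imp ((v (Fin.last n)).1.val u)
            (IA.interp κ φ (Fin.snoc v ((v (Fin.last n)).fam u)))) := by
  simp only [ImplicativeAlgebra.SigEquiv, ImplicativeAlgebra.interp_ball]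
  exact ⟨ImplicativeAlgebra.sigLe_of_entails
      ImplicativeAlgebra.Entails.var_last.iInf_dom_of_ball,
    ImplicativeAlgebra.sigLe_of_entails
      (ImplicativeAlgebra.Entails.var_last.ball_of_iInf_dom φ)⟩

theorem stmt9 {A : Type u} [CompleteLattice A] (IA : ImplicativeAlgebra A)
    (κ : Cardinal.{u}) (hκ : κ.IsInaccessible) (hA : Cardinal.mk A < κ) (n : ℕ) (φ : SetFormula (n + 2)) :
    IA.SigEquiv
      (fun v : Fin (n + 1) → WSet A κ =>
        IA.interp κ
          (SetFormula.all
            ((SetFormula.mem (Fin.last (n + 1)) ((Fin.last n).castSucc)).imp φ)) v)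
      (fun v : Fin (n + 1) → WSet A κ =>
        ⨅ u : (v (Fin.last n)).1.dom,
          IA.imp ((v (Fin.last n)).1.val u)
            (IA.interp κ φ (Fin.snoc v ((v (Fin.last n)).fam u)))) :=
  stmt9_general IA κ n φ
end
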